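/- Reduction Theorem for a Common Subspace: Let ρ1, ρ2 be density matrices on a finite-dimensional complex inner product space, with a priori probabilities p1, p2 > 0, p1 + p2 = 1. Let H∩ = support(ρ1) ∩ support(ρ2), let Π' be the orthogonal projection onto the orthogonal complement of H∩, assume N_i = Tr(ρ_i Π') > 0 for i = 1, 2, and set ρ'_i = Π' ρ_i Π' / N_i, N = N1 p1 + N2 p2, p'_i = N_i p_i / N. Then the infimum of the failure probability over all USD POVMs for (ρ1, ρ2) with a priori probabilities (p1, p2) equals (1 − N1) p1 + (1 − N2) p2 + N times the infimum of the failure probability over all USD POVMs for (ρ'1, ρ'2) with a priori probabilities (p'1, p'2). -/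

import Mathlib

open Matrix ComplexOrder

noncomputable section

abbrev Mat (n : ℕ) := Matrix (Fin n) (Fin n) ℂ

/-- The support (range) of a matrix, viewed as an operator on Euclidean space. -/
def MatSupport {n : ℕ} (A : Mat n) : Submodule ℂ (EuclideanSpace ℂ (Fin n)) :=
  LinearMap.range (Matrix.toEuclideanLin A)

/-- The matrix of the orthogonal projection onto a subspace of Euclidean space. -/
def projMat {n : ℕ} (K : Submodule ℂ (EuclideanSpace ℂ (Fin n))) : Mat n :=
  Matrix.toEuclideanLin.symm (K.subtype ∘ₗ (K.orthogonalProjectionOnto).toLinearMap)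

/-- A density matrix: positive semidefinite (hence Hermitian) with trace one. -/
def IsDensity {n : ℕ} (ρ : Mat n) : Prop := ρ.PosSemidef ∧ ρ.trace = 1

/-- A USD POVM for the pair (ρ1, ρ2). -/
def IsUSD {n : ℕ} (ρ1 ρ2 F1 F2 Fq : Mat n) : Prop :=
  F1.PosSemidef ∧ F2.PosSemidef ∧ Fq.PosSemidef ∧ F1 + F2 + Fq = 1 ∧
  (ρ1 * F2).trace = 0 ∧ (ρ2 * F1).trace = 0

/-- Failure probability of a USD POVM with inconclusive element `Fq`. -/
def failQ {n : ℕ} (p1 p2 : ℝ) (ρ1 ρ2 Fq : Mat n) : ℝ :=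
  p1 * ((ρ1 * Fq).trace).re + p2 * ((ρ2 * Fq).trace).re

/-! ### Auxiliary lemmas -/

lemma trace_CT_self {n : ℕ} (M : Mat n) :
    ∃ r : ℝ, 0 ≤ r ∧ (Mᴴ * M).trace = (r : ℂ) ∧ (r = 0 → M = 0) := by
  refine ⟨∑ i, ∑ j, Complex.normSq (M j i),
    Finset.sum_nonneg fun i _ => Finset.sum_nonneg fun j _ => Complex.normSq_nonneg _, ?_, ?_⟩
  · rw [Matrix.trace]
    push_cast
    refine Finset.sum_congr rfl fun i _ => ?_
    rw [Matrix.diag_apply, Matrix.mul_apply]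
    refine Finset.sum_congr rfl fun j _ => ?_
    rw [Matrix.conjTranspose_apply, Complex.normSq_eq_conj_mul_self]
    rfl
  · intro hr
    ext i j
    have h := (Finset.sum_eq_zero_iff_of_nonneg (fun i _ => Finset.sum_nonneg
      (fun j _ => Complex.normSq_nonneg (M j i)))).mp hr
    have h2 := (Finset.sum_eq_zero_iff_of_nonneg
      (fun k _ => Complex.normSq_nonneg (M k j))).mp (h j (Finset.mem_univ j)) i
      (Finset.mem_univ i)
    simpa using Complex.normSq_eq_zero.mp h2

open scoped MatrixOrder in
lemma psd_trace_mul {n : ℕ} {A B : Mat n} (hA : A.PosSemidef) (hB : B.PosSemidef) :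
    ∃ r : ℝ, 0 ≤ r ∧ (A * B).trace = (r : ℂ) ∧ (r = 0 → A * B = 0) := by
  have hAH : (CFC.sqrt A)ᴴ = CFC.sqrt A := (CFC.sqrt_nonneg A).posSemidef.1
  have hBH : (CFC.sqrt B)ᴴ = CFC.sqrt B := (CFC.sqrt_nonneg B).posSemidef.1
  have hMH : (CFC.sqrt B * CFC.sqrt A)ᴴ = CFC.sqrt A * CFC.sqrt B := by
    rw [conjTranspose_mul, hAH, hBH]
  obtain ⟨r, hr0, htr, hz⟩ := trace_CT_self (CFC.sqrt B * CFC.sqrt A)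
  rw [hMH] at htr
  have e0 : CFC.sqrt A * (CFC.sqrt B * CFC.sqrt B) * CFC.sqrt A = CFC.sqrt A * B * CFC.sqrt A := by
    rw [CFC.sqrt_mul_sqrt_self B hB.nonneg]
  have e1 : CFC.sqrt A * B * CFC.sqrt A = CFC.sqrt A * CFC.sqrt B * (CFC.sqrt B * CFC.sqrt A) := by
    rw [← e0]; noncomm_ring
  have key : (A * B).trace = (CFC.sqrt A * CFC.sqrt B * (CFC.sqrt B * CFC.sqrt A)).trace := by
    calc (A * B).trace = ((CFC.sqrt A * CFC.sqrt A) * B).trace := by rw [CFC.sqrt_mul_sqrt_self A hA.nonneg]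
    _ = (CFC.sqrt A * (CFC.sqrt A * B)).trace := by rw [mul_assoc]
    _ = ((CFC.sqrt A * B) * CFC.sqrt A).trace := trace_mul_comm _ _
    _ = (CFC.sqrt A * CFC.sqrt B * (CFC.sqrt B * CFC.sqrt A)).trace := by rw [← e1]
  refine ⟨r, hr0, key.trans htr, fun h => ?_⟩
  have hM0 : CFC.sqrt B * CFC.sqrt A = 0 := hz h
  have hAB0 : CFC.sqrt A * CFC.sqrt B = 0 := by rw [← hMH, hM0, conjTranspose_zero]
  have e2 : CFC.sqrt A * CFC.sqrt A * (CFC.sqrt B * CFC.sqrt B) = A * B := by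
    rw [CFC.sqrt_mul_sqrt_self A hA.nonneg, CFC.sqrt_mul_sqrt_self B hB.nonneg]
  have e3 : CFC.sqrt A * CFC.sqrt A * (CFC.sqrt B * CFC.sqrt B) =
      CFC.sqrt A * (CFC.sqrt A * CFC.sqrt B) * CFC.sqrt B := by noncomm_ring
  rw [← e2, e3, hAB0, mul_zero, zero_mul]

lemma toEuclideanLin_mul {n : ℕ} (A B : Mat n) :
    Matrix.toEuclideanLin (A * B) =
      (Matrix.toEuclideanLin A).comp (Matrix.toEuclideanLin B) := by
  refine LinearMap.ext fun x => ?_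
  simp [Matrix.toEuclideanLin_apply, Matrix.mulVec_mulVec]

lemma toEuclideanLin_one {n : ℕ} :
    Matrix.toEuclideanLin (1 : Mat n) = LinearMap.id := by
  refine LinearMap.ext fun x => ?_
  simp [Matrix.toEuclideanLin_apply]

lemma projMat_toEuclideanLin {n : ℕ} (K : Submodule ℂ (EuclideanSpace ℂ (Fin n))) :
    Matrix.toEuclideanLin (projMat K) =
      K.subtype ∘ₗ (K.orthogonalProjectionOnto).toLinearMap :=
  Matrix.toEuclideanLin.apply_symm_apply _

lemma projMat_conjTranspose {n : ℕ} (K : Submodule ℂ (EuclideanSpace ℂ (Fin n))) :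
    (projMat K)ᴴ = projMat K := by
  apply Matrix.toEuclideanLin.injective
  rw [Matrix.toEuclideanLin_conjTranspose_eq_adjoint, projMat_toEuclideanLin]
  symm
  rw [LinearMap.eq_adjoint_iff]
  intro x y
  exact Submodule.starProjection_isSymmetric K x y

lemma projMat_idem {n : ℕ} (K : Submodule ℂ (EuclideanSpace ℂ (Fin n))) :
    projMat K * projMat K = projMat K := by
  apply Matrix.toEuclideanLin.injective
  rw [toEuclideanLin_mul, projMat_toEuclideanLin]
  refine LinearMap.ext fun x => ?_
  simp [Submodule.orthogonalProjectionOnto_mem_subspace_eq_self, Submodule.starProjection_eq_self_iff]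

lemma projMat_posSemidef {n : ℕ} (K : Submodule ℂ (EuclideanSpace ℂ (Fin n))) :
    (projMat K).PosSemidef := by
  have h : projMat K = (projMat K)ᴴ * projMat K := by
    rw [projMat_conjTranspose, projMat_idem]
  rw [h]; exact Matrix.posSemidef_conjTranspose_mul_self _

lemma one_sub_proj_posSemidef {n : ℕ} (K : Submodule ℂ (EuclideanSpace ℂ (Fin n))) :
    ((1 : Mat n) - projMat K).PosSemidef := by
  have hH : ((1 : Mat n) - projMat K)ᴴ = 1 - projMat K := by
    rw [conjTranspose_sub, conjTranspose_one, projMat_conjTranspose]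
  have h : (1 : Mat n) - projMat K = ((1 : Mat n) - projMat K)ᴴ * (1 - projMat K) := by
    rw [hH, sub_mul, mul_sub, mul_sub, one_mul, mul_one, one_mul, projMat_idem]
    abel
  rw [h]; exact Matrix.posSemidef_conjTranspose_mul_self _

lemma psd_smul_real {n : ℕ} {A : Mat n} (hA : A.PosSemidef) {c : ℝ} (hc : 0 ≤ c) :
    (((c : ℂ)) • A).PosSemidef := by
  constructor
  · unfold Matrix.IsHermitian
    rw [conjTranspose_smul, hA.1]
    congr 1
    simp [Complex.star_def, Complex.conj_ofReal]
  · intro x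
    have hc' : (0:ℂ) ≤ (c : ℂ) := by exact_mod_cast Complex.zero_le_real.mpr hc
    exact (hA.smul hc').2 x

lemma kill_lemma {n : ℕ} (F ρ : Mat n) (K : Submodule ℂ (EuclideanSpace ℂ (Fin n)))
    (hFρ : F * ρ = 0) (hK : K ≤ MatSupport ρ) :
    F * ((1 : Mat n) - projMat Kᗮ) = 0 := by
  rw [← (Matrix.toEuclideanLin (𝕜 := ℂ) (m := Fin n) (n := Fin n)).map_eq_zero_iff]
  rw [toEuclideanLin_mul]
  refine LinearMap.ext fun v => ?_
  have hv : Matrix.toEuclideanLin ((1 : Mat n) - projMat Kᗮ) v =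
      (K.orthogonalProjectionOnto v : EuclideanSpace ℂ (Fin n)) := by
    rw [map_sub, toEuclideanLin_one, projMat_toEuclideanLin]
    have hsum := K.starProjection_add_starProjection_orthogonal v
    simp only [LinearMap.sub_apply, LinearMap.id_apply, LinearMap.coe_comp,
      Function.comp_apply, Submodule.coe_subtype, ContinuousLinearMap.coe_coe]
    rw [sub_eq_iff_eq_add]
    exact hsum.symm
  simp only [LinearMap.comp_apply, hv, LinearMap.zero_apply]
  obtain ⟨w, hw⟩ := hK (K.orthogonalProjectionOnto v).2
  rw [← hw, ← LinearMap.comp_apply, ← toEuclideanLin_mul, hFρ, map_zero,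
    LinearMap.zero_apply]

lemma trace_PAP {n : ℕ} (P A G : Mat n) :
    ((P * A * P) * G).trace = (A * (P * G * P)).trace := by
  calc ((P * A * P) * G).trace = (P * (A * (P * G))).trace := by
        rw [mul_assoc (P * A) P G, mul_assoc]
  _ = ((A * (P * G)) * P).trace := trace_mul_comm _ _
  _ = (A * (P * G * P)).trace := by rw [mul_assoc]
/-- Reduction Theorem for a Common Subspace: the infimum of the failure
probability over all USD POVMs for `(ρ1, ρ2)` equals
`(1 − N1) p1 + (1 − N2) p2 + N` times the infimum of the failure probability over all
USD POVMs for the reduced problem `(ρ1', ρ2')` with a priori probabilities `(p1', p2')`. -/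
theorem usd_reduction_common_subspace {n : ℕ} (ρ1 ρ2 : Mat n)
    (h1 : IsDensity ρ1) (h2 : IsDensity ρ2)
    (p1 p2 : ℝ) (hp1 : 0 < p1) (hp2 : 0 < p2) (hp : p1 + p2 = 1)
    (P' : Mat n) (hP' : P' = projMat ((MatSupport ρ1 ⊓ MatSupport ρ2)ᗮ))
    (N1 N2 : ℝ) (hN1 : N1 = ((ρ1 * P').trace).re) (hN2 : N2 = ((ρ2 * P').trace).re)
    (hN1pos : 0 < N1) (hN2pos : 0 < N2)
    (ρ1' ρ2' : Mat n)
    (hρ1' : ρ1' = ((N1 : ℂ))⁻¹ • (P' * ρ1 * P'))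
    (hρ2' : ρ2' = ((N2 : ℂ))⁻¹ • (P' * ρ2 * P'))
    (N : ℝ) (hN : N = N1 * p1 + N2 * p2)
    (p1' p2' : ℝ) (hp1' : p1' = N1 * p1 / N) (hp2' : p2' = N2 * p2 / N) :
    sInf {q : ℝ | ∃ F1 F2 Fq : Mat n, IsUSD ρ1 ρ2 F1 F2 Fq ∧ q = failQ p1 p2 ρ1 ρ2 Fq} =
      (1 - N1) * p1 + (1 - N2) * p2 +
        N * sInf {q : ℝ | ∃ F1 F2 Fq : Mat n,
          IsUSD ρ1' ρ2' F1 F2 Fq ∧ q = failQ p1' p2' ρ1' ρ2' Fq} := by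
  have hN1ne : (N1:ℂ) ≠ 0 := by exact_mod_cast hN1pos.ne'
  have hN2ne : (N2:ℂ) ≠ 0 := by exact_mod_cast hN2pos.ne'
  have hNpos : 0 < N := by rw [hN]; positivity
  have hNne : N ≠ 0 := hNpos.ne'
  have hPH : P'ᴴ = P' := by rw [hP']; exact projMat_conjTranspose _
  have hPP : P' * P' = P' := by rw [hP']; exact projMat_idem _
  have hPpsd : P'.PosSemidef := by rw [hP']; exact projMat_posSemidef _
  have hQpsd : ((1:Mat n) - P').PosSemidef := by rw [hP']; exact one_sub_proj_posSemidef _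
  have h1P : (ρ1 * P').trace = (N1 : ℂ) := by
    obtain ⟨r, hr0, htr, _⟩ := psd_trace_mul h1.1 hPpsd
    rw [htr, hN1, htr, Complex.ofReal_re]
  have h2P : (ρ2 * P').trace = (N2 : ℂ) := by
    obtain ⟨r, hr0, htr, _⟩ := psd_trace_mul h2.1 hPpsd
    rw [htr, hN2, htr, Complex.ofReal_re]
  have hτ1 : (P' * ρ1 * P').trace = (N1:ℂ) := by
    rw [trace_mul_comm (P' * ρ1) P', ← mul_assoc, hPP, trace_mul_comm, h1P]
  have hτ2 : (P' * ρ2 * P').trace = (N2:ℂ) := by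
    rw [trace_mul_comm (P' * ρ2) P', ← mul_assoc, hPP, trace_mul_comm, h2P]
  have hρ1'tr : ρ1'.trace = 1 := by
    rw [hρ1', trace_smul, hτ1, smul_eq_mul, inv_mul_cancel₀ hN1ne]
  have hρ2'tr : ρ2'.trace = 1 := by
    rw [hρ2', trace_smul, hτ2, smul_eq_mul, inv_mul_cancel₀ hN2ne]
  have hρ1'psd : ρ1'.PosSemidef := by
    rw [hρ1']
    have h := h1.1.conjTranspose_mul_mul_same P'
    rw [hPH] at h
    rw [show ((N1:ℂ))⁻¹ = ((N1⁻¹ : ℝ) : ℂ) by push_cast; ring]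
    exact psd_smul_real h (by positivity)
  have hρ2'psd : ρ2'.PosSemidef := by
    rw [hρ2']
    have h := h2.1.conjTranspose_mul_mul_same P'
    rw [hPH] at h
    rw [show ((N2:ℂ))⁻¹ = ((N2⁻¹ : ℝ) : ℂ) by push_cast; ring]
    exact psd_smul_real h (by positivity)
  have hρ1'G : ∀ G : Mat n, (ρ1' * G).trace = (N1:ℂ)⁻¹ * ((P' * ρ1 * P') * G).trace := by
    intro G; rw [hρ1', smul_mul_assoc, trace_smul, smul_eq_mul]
  have hρ2'G : ∀ G : Mat n, (ρ2' * G).trace = (N2:ℂ)⁻¹ * ((P' * ρ2 * P') * G).trace := by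
    intro G; rw [hρ2', smul_mul_assoc, trace_smul, smul_eq_mul]
  set c : ℝ := (1 - N1) * p1 + (1 - N2) * p2 with hc
  -- Forward: every USD POVM for the original pair is a USD POVM for the reduced pair
  have fwd : ∀ F1 F2 Fq : Mat n, IsUSD ρ1 ρ2 F1 F2 Fq →
      IsUSD ρ1' ρ2' F1 F2 Fq ∧
      failQ p1 p2 ρ1 ρ2 Fq = c + N * failQ p1' p2' ρ1' ρ2' Fq := by
    rintro F1 F2 Fq ⟨hF1, hF2, hFq, hsum, h12, h21⟩
    have hρ1F2 : ρ1 * F2 = 0 := by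
      obtain ⟨r, hr0, htr, hz⟩ := psd_trace_mul h1.1 hF2
      refine hz ?_
      have : (r:ℂ) = 0 := by rw [← htr, h12]
      exact_mod_cast this
    have hρ2F1 : ρ2 * F1 = 0 := by
      obtain ⟨r, hr0, htr, hz⟩ := psd_trace_mul h2.1 hF1
      refine hz ?_
      have : (r:ℂ) = 0 := by rw [← htr, h21]
      exact_mod_cast this
    have hF2ρ1 : F2 * ρ1 = 0 := by
      have h := congrArg Matrix.conjTranspose hρ1F2
      rwa [conjTranspose_mul, hF2.1, h1.1.1, conjTranspose_zero] at h
    have hF1ρ2 : F1 * ρ2 = 0 := by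
      have h := congrArg Matrix.conjTranspose hρ2F1
      rwa [conjTranspose_mul, hF1.1, h2.1.1, conjTranspose_zero] at h
    have hF2kill : F2 * ((1:Mat n) - P') = 0 := by
      rw [hP']; exact kill_lemma F2 ρ1 _ hF2ρ1 inf_le_left
    have hF1kill : F1 * ((1:Mat n) - P') = 0 := by
      rw [hP']; exact kill_lemma F1 ρ2 _ hF1ρ2 inf_le_right
    have hF2P : F2 * P' = F2 := by
      have h := hF2kill; rw [mul_sub, mul_one, sub_eq_zero] at h; exact h.symm
    have hF1P : F1 * P' = F1 := by
      have h := hF1kill; rw [mul_sub, mul_one, sub_eq_zero] at h; exact h.symm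
    have hPF2P : P' * F2 * P' = F2 := by
      have h := congrArg Matrix.conjTranspose hF2P
      rw [conjTranspose_mul, hF2.1, hPH] at h
      rw [h, hF2P]
    have hPF1P : P' * F1 * P' = F1 := by
      have h := congrArg Matrix.conjTranspose hF1P
      rw [conjTranspose_mul, hF1.1, hPH] at h
      rw [h, hF1P]
    have h12' : (ρ1' * F2).trace = 0 := by
      rw [hρ1'G F2, trace_PAP, hPF2P, h12, mul_zero]
    have h21' : (ρ2' * F1).trace = 0 := by
      rw [hρ2'G F1, trace_PAP, hPF1P, h21, mul_zero]
    have hFqe : Fq = 1 - F1 - F2 := by rw [← hsum]; abel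
    obtain ⟨r1, hr10, htr1, _⟩ := psd_trace_mul h1.1 hF1
    obtain ⟨r2, hr20, htr2, _⟩ := psd_trace_mul h2.1 hF2
    have t1 : (ρ1 * Fq).trace = ((1 - r1 : ℝ) : ℂ) := by
      rw [hFqe, mul_sub, mul_sub, mul_one, trace_sub, trace_sub, h1.2, htr1, h12]
      push_cast; ring
    have t2 : (ρ2 * Fq).trace = ((1 - r2 : ℝ) : ℂ) := by
      rw [hFqe, mul_sub, mul_sub, mul_one, trace_sub, trace_sub, h2.2, htr2, h21]
      push_cast; ring
    have u1 : (ρ1' * F1).trace = (N1:ℂ)⁻¹ * (r1:ℂ) := by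
      rw [hρ1'G F1, trace_PAP, hPF1P, htr1]
    have u2 : (ρ2' * F2).trace = (N2:ℂ)⁻¹ * (r2:ℂ) := by
      rw [hρ2'G F2, trace_PAP, hPF2P, htr2]
    have t1' : (ρ1' * Fq).trace = ((1 - r1 / N1 : ℝ) : ℂ) := by
      rw [hFqe, mul_sub, mul_sub, mul_one, trace_sub, trace_sub, hρ1'tr, u1, h12']
      push_cast
      field_simp
      ring
    have t2' : (ρ2' * Fq).trace = ((1 - r2 / N2 : ℝ) : ℂ) := by
      rw [hFqe, mul_sub, mul_sub, mul_one, trace_sub, trace_sub, hρ2'tr, u2, h21']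
      push_cast
      field_simp
      ring
    refine ⟨⟨hF1, hF2, hFq, hsum, h12', h21'⟩, ?_⟩
    rw [failQ, failQ, t1, t2, t1', t2']
    simp only [Complex.ofReal_re]
    rw [hc, hp1', hp2', hN]
    have hden : N1 * p1 + N2 * p2 ≠ 0 := by positivity
    field_simp
    ring
  -- Backward: every USD POVM for the reduced pair yields one for the original pair
  have bwd : ∀ G1 G2 Gq : Mat n, IsUSD ρ1' ρ2' G1 G2 Gq →
      ∃ F1 F2 Fq : Mat n, IsUSD ρ1 ρ2 F1 F2 Fq ∧
        failQ p1 p2 ρ1 ρ2 Fq = c + N * failQ p1' p2' ρ1' ρ2' Gq := by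
    rintro G1 G2 Gq ⟨hG1, hG2, hGq, hsum, h12, h21⟩
    have hPG1 : (P' * G1 * P').PosSemidef := by
      have h := hG1.conjTranspose_mul_mul_same P'; rwa [hPH] at h
    have hPG2 : (P' * G2 * P').PosSemidef := by
      have h := hG2.conjTranspose_mul_mul_same P'; rwa [hPH] at h
    have hPGq : (P' * Gq * P').PosSemidef := by
      have h := hGq.conjTranspose_mul_mul_same P'; rwa [hPH] at h
    have hsum5 : P' * G1 * P' + P' * G2 * P' + P' * Gq * P' = P' := by
      have h : P' * G1 * P' + P' * G2 * P' + P' * Gq * P' = P' * (G1 + G2 + Gq) * P' := by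
        noncomm_ring
      rw [h, hsum, mul_one, hPP]
    have hFqe : (1:Mat n) - P' * G1 * P' - P' * G2 * P' = (1 - P') + P' * Gq * P' := by
      have h : (1:Mat n) - P' * G1 * P' - P' * G2 * P' =
          1 - (P' * G1 * P' + P' * G2 * P' + P' * Gq * P') + P' * Gq * P' := by abel
      rw [h, hsum5]
    have hFqpsd : ((1:Mat n) - P' * G1 * P' - P' * G2 * P').PosSemidef := by
      rw [hFqe]; exact hQpsd.add hPGq
    have e2 : ((P' * ρ1 * P') * G2).trace = 0 := by
      have h' := (hρ1'G G2).symm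
      rw [h12, mul_eq_zero] at h'
      exact h'.resolve_left (inv_ne_zero hN1ne)
    have e1 : ((P' * ρ2 * P') * G1).trace = 0 := by
      have h' := (hρ2'G G1).symm
      rw [h21, mul_eq_zero] at h'
      exact h'.resolve_left (inv_ne_zero hN2ne)
    obtain ⟨s1, hs10, hts1, _⟩ := psd_trace_mul hρ1'psd hGq
    obtain ⟨s2, hs20, hts2, _⟩ := psd_trace_mul hρ2'psd hGq
    have hG1e : G1 = 1 - G2 - Gq := by rw [← hsum]; abel
    have hG2e : G2 = 1 - G1 - Gq := by rw [← hsum]; abel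
    have hG1tr : (ρ1' * G1).trace = ((1 - s1 : ℝ) : ℂ) := by
      rw [hG1e, mul_sub, mul_sub, mul_one, trace_sub, trace_sub, hρ1'tr, h12, hts1]
      push_cast; ring
    have hG2tr : (ρ2' * G2).trace = ((1 - s2 : ℝ) : ℂ) := by
      rw [hG2e, mul_sub, mul_sub, mul_one, trace_sub, trace_sub, hρ2'tr, h21, hts2]
      push_cast; ring
    have hF1tr : (ρ1 * (P' * G1 * P')).trace = ((N1 * (1 - s1) : ℝ) : ℂ) := by
      rw [← trace_PAP]
      have h' := hρ1'G G1
      rw [hG1tr] at h'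
      have h'' := (inv_mul_eq_iff_eq_mul₀ hN1ne).mp h'.symm
      rw [h'']; push_cast; ring
    have hF2tr : (ρ2 * (P' * G2 * P')).trace = ((N2 * (1 - s2) : ℝ) : ℂ) := by
      rw [← trace_PAP]
      have h' := hρ2'G G2
      rw [hG2tr] at h'
      have h'' := (inv_mul_eq_iff_eq_mul₀ hN2ne).mp h'.symm
      rw [h'']; push_cast; ring
    refine ⟨P' * G1 * P', P' * G2 * P', 1 - P' * G1 * P' - P' * G2 * P',
      ⟨hPG1, hPG2, hFqpsd, by abel, ?_, ?_⟩, ?_⟩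
    · rw [← trace_PAP]; exact e2
    · rw [← trace_PAP]; exact e1
    · have tq1 : (ρ1 * ((1:Mat n) - P' * G1 * P' - P' * G2 * P')).trace =
          ((1 - N1 * (1 - s1) : ℝ) : ℂ) := by
        rw [mul_sub, mul_sub, mul_one, trace_sub, trace_sub, h1.2, hF1tr,
          ← trace_PAP, e2]
        push_cast; ring
      have tq2 : (ρ2 * ((1:Mat n) - P' * G1 * P' - P' * G2 * P')).trace =
          ((1 - N2 * (1 - s2) : ℝ) : ℂ) := by
        rw [mul_sub, mul_sub, mul_one, trace_sub, trace_sub, h2.2, hF2tr,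
          ← trace_PAP, e1]
        push_cast; ring
      rw [failQ, failQ, tq1, tq2, hts1, hts2]
      simp only [Complex.ofReal_re]
      rw [hc, hp1', hp2', hN]
      have hden : N1 * p1 + N2 * p2 ≠ 0 := by positivity
      field_simp
      ring
  -- set equality
  have hSet : {q : ℝ | ∃ F1 F2 Fq : Mat n, IsUSD ρ1 ρ2 F1 F2 Fq ∧
        q = failQ p1 p2 ρ1 ρ2 Fq} =
      (fun q' => c + N * q') ''
        {q : ℝ | ∃ F1 F2 Fq : Mat n, IsUSD ρ1' ρ2' F1 F2 Fq ∧
          q = failQ p1' p2' ρ1' ρ2' Fq} := by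
    ext q
    constructor
    · rintro ⟨F1, F2, Fq, hU, rfl⟩
      obtain ⟨hU', hval⟩ := fwd F1 F2 Fq hU
      exact ⟨failQ p1' p2' ρ1' ρ2' Fq, ⟨F1, F2, Fq, hU', rfl⟩, hval.symm⟩
    · rintro ⟨q', ⟨G1, G2, Gq, hU, rfl⟩, rfl⟩
      obtain ⟨F1, F2, Fq, hU', hval⟩ := bwd G1 G2 Gq hU
      exact ⟨F1, F2, Fq, hU', hval.symm⟩
  have hne : {q : ℝ | ∃ F1 F2 Fq : Mat n, IsUSD ρ1' ρ2' F1 F2 Fq ∧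
      q = failQ p1' p2' ρ1' ρ2' Fq}.Nonempty := by
    refine ⟨failQ p1' p2' ρ1' ρ2' 1, 0, 0, 1,
      ⟨Matrix.PosSemidef.zero, Matrix.PosSemidef.zero, Matrix.PosSemidef.one, by simp,
        by simp, by simp⟩, rfl⟩
  have hp1'0 : 0 ≤ p1' := by rw [hp1']; positivity
  have hp2'0 : 0 ≤ p2' := by rw [hp2']; positivity
  have hbdd : BddBelow {q : ℝ | ∃ F1 F2 Fq : Mat n, IsUSD ρ1' ρ2' F1 F2 Fq ∧
      q = failQ p1' p2' ρ1' ρ2' Fq} := by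
    refine ⟨0, ?_⟩
    rintro q ⟨F1, F2, Fq, ⟨_, _, hFq, _, _, _⟩, rfl⟩
    obtain ⟨s1, hs10, hts1, _⟩ := psd_trace_mul hρ1'psd hFq
    obtain ⟨s2, hs20, hts2, _⟩ := psd_trace_mul hρ2'psd hFq
    rw [failQ, hts1, hts2]
    simp only [Complex.ofReal_re]
    exact add_nonneg (mul_nonneg hp1'0 hs10) (mul_nonneg hp2'0 hs20)
  rw [hSet]
  have e : ℝ ≃o ℝ := (OrderIso.mulLeft₀ N hNpos).trans (OrderIso.addLeft c)
  have heq : (fun q' : ℝ => c + N * q') = ⇑((OrderIso.mulLeft₀ N hNpos).trans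
      (OrderIso.addLeft c)) := by
    funext x; simp
  rw [heq, ← OrderIso.map_csInf' _ hne hbdd]
  simp
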